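/- For every natural number p, every real λ, and every real y with |λy| < 1, one has Σ_{n=0}^∞ (n)_{p,λ} T_n(y) = Σ_{k=0}^p S_{2,λ}(p,k) (y^{k+1}/(k+1)) (1)_{k+1,λ} (1+λy)^{−(k+1)} e_λ(y), where the series on the left converges. -/

import Mathlib

noncomputable section

/-- Generalized falling factorial `(x)_{n,λ} = x(x-λ)⋯(x-(n-1)λ)`, with `(x)_{0,λ} = 1`. -/
def dff (lam x : ℝ) (n : ℕ) : ℝ := ∏ i ∈ Finset.range n, (x - i * lam)

/-- Degenerate exponential `e_λ(y) = ∑_{n=0}^∞ (1)_{n,λ} y^n / n!`. -/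
def dexp (lam y : ℝ) : ℝ := ∑' n : ℕ, dff lam 1 n * y ^ n / n.factorial

/-- Truncated degenerate exponential tail
`T_n(y) = e_λ(y) - ∑_{k=0}^n (1)_{k,λ} y^k / k!`. -/
def dtail (lam y : ℝ) (n : ℕ) : ℝ :=
  dexp lam y - ∑ k ∈ Finset.range (n + 1), dff lam 1 k * y ^ k / k.factorial

/-- Degenerate Stirling number of the second kind
`S_{2,λ}(n,k) = (1/k!) ∑_{j=0}^k (-1)^{k-j} C(k,j) (j)_{n,λ}`. -/
def dStirling (lam : ℝ) (n k : ℕ) : ℝ :=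
  (1 / (k.factorial : ℝ)) *
    ∑ j ∈ Finset.range (k + 1), (-1 : ℝ) ^ (k - j) * (k.choose j : ℝ) * dff lam j n

/-!
Writing `T_n(y) = ∑_{m > n} (1)_{m,λ} y^m/m!` and exchanging the absolutely convergent double
sum, the left side becomes `∑_m (1)_{m,λ} y^m/m! · ∑_{n < m} (n)_{p,λ}`. Newton's forward
difference formula gives `(n)_{p,λ} = ∑_k S_{2,λ}(p,k) (n)_k`, since `k! S_{2,λ}(p,k)` is the
`k`-th forward difference of `x ↦ (x)_{p,λ}` at `0`, and `∑_{n < m} (n)_k = (m)_{k+1}/(k+1)`.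
Finally, with `e_λ^x(y) = ∑_j (x)_{j,λ} y^j/j!`, one has
`∑_m (1)_{m,λ} (m)_{k+1} y^m/m! = (1)_{k+1,λ} y^{k+1} e_λ^{1-(k+1)λ}(y)`, and
`e_λ^{1-(k+1)λ}(y) = (1+λy)^{-(k+1)} e_λ(y)` because multiplying the series of
`e_λ^{x-λ}(y)` by `1 + λy` gives the series of `e_λ^x(y)`.
-/

open Finset Filter Topology Polynomial Nat fwdDiff

theorem dff_zero (lam x : ℝ) : dff lam x 0 = 1 := by simp [dff]

theorem dff_succ (lam x : ℝ) (n : ℕ) : dff lam x (n + 1) = dff lam x n * (x - n * lam) :=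
  prod_range_succ _ n

theorem dff_succ' (lam x : ℝ) (n : ℕ) : dff lam x (n + 1) = x * dff lam (x - lam) n := by
  simp only [dff, prod_range_succ', Nat.cast_zero, zero_mul, sub_zero, Nat.cast_succ]
  rw [mul_comm]
  congr 1
  exact prod_congr rfl fun i _ => by ring

theorem dff_add (lam x : ℝ) (m n : ℕ) :
    dff lam x (m + n) = dff lam x m * dff lam (x - m * lam) n := by
  induction n with
  | zero => simp [dff_zero]
  | succ n ih =>
    rw [← add_assoc, dff_succ, ih, dff_succ]
    push_cast
    ring

theorem dff_eq_eval (lam x : ℝ) (p : ℕ) :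
    dff lam x p = (∏ i ∈ range p, (X - C ((i : ℝ) * lam))).eval x := by
  simp [dff, eval_prod]

theorem fwdDiff_iter_dff_eq_zero (lam : ℝ) {p k : ℕ} (hpk : p < k) :
    Δ_[1] ^[k] (fun x => dff lam x p) = 0 := by
  have hdeg : (∏ i ∈ range p, (X - C ((i : ℝ) * lam))).natDegree ≤ p := by
    refine (natDegree_prod_le _ _).trans ?_
    simpa using sum_le_sum fun i (_ : i ∈ range p) => natDegree_X_sub_C_le ((i : ℝ) * lam)
  rw [show (fun x => dff lam x p) = _ from funext (dff_eq_eval lam · p)]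
  exact fwdDiff_iter_eq_zero_of_degree_lt (hdeg.trans_lt hpk)

theorem fwdDiff_iter_dff_zero (lam : ℝ) (p k : ℕ) :
    Δ_[1] ^[k] (fun x => dff lam x p) 0 = k ! * dStirling lam p k := by
  rw [fwdDiff_iter_eq_sum_shift, dStirling, ← mul_assoc, mul_one_div_cancel (by positivity),
    one_mul]
  refine sum_congr rfl fun j _ => ?_
  simp

theorem dff_natCast_eq_sum_dStirling_mul_descFactorial (lam : ℝ) (p n : ℕ) :
    dff lam n p = ∑ k ∈ range (p + 1), dStirling lam p k * n.descFactorial k := by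
  set f : ℝ → ℝ := fun x => dff lam x p
  set g : ℕ → ℝ := fun k => n.choose k • Δ_[1] ^[k] f 0
  have hg : ∀ k, n < k ∨ p < k → g k = 0 := by
    rintro k (hnk | hpk)
    · simp [g, Nat.choose_eq_zero_of_lt hnk]
    · simp [g, f, fwdDiff_iter_dff_eq_zero lam hpk]
  have hnewton : dff lam n p = ∑ k ∈ range (n + 1), g k := by
    simpa [f, g] using shift_eq_sum_fwdDiff_iter 1 f n 0
  have hsub (q : ℕ) (hq : q = n ∨ q = p) :
      ∑ k ∈ range (q + 1), g k = ∑ k ∈ range (n + p + 1), g k :=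
    sum_subset (range_subset_range.2 (by omega)) fun k _ hk => hg k (by simp at hk; omega)
  rw [hnewton, hsub n (.inl rfl), ← hsub p (.inr rfl)]
  refine sum_congr rfl fun k _ => ?_
  simp only [g, f, fwdDiff_iter_dff_zero, Nat.descFactorial_eq_factorial_mul_choose, nsmul_eq_mul]
  push_cast
  ring

theorem sum_range_descFactorial_mul (m k : ℕ) :
    (∑ n ∈ range m, n.descFactorial k) * (k + 1) = m.descFactorial (k + 1) := by
  induction m with
  | zero => simp
  | succ m ih =>
    rw [sum_range_succ, add_mul, ih, Nat.succ_descFactorial_succ, Nat.descFactorial_succ]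
    rcases lt_or_ge m k with hmk | hkm
    · simp [Nat.descFactorial_eq_zero_iff_lt.2 hmk]
    · obtain ⟨d, rfl⟩ := Nat.exists_eq_add_of_le hkm
      rw [Nat.add_sub_cancel_left]
      ring

-- `∑ n, dexpTerm lam x y n` is `e_λ^x(y)`; `dexp lam y` is the case `x = 1`.
def dexpTerm (lam x y : ℝ) (n : ℕ) : ℝ := dff lam x n * y ^ n / n !

theorem dexpTerm_zero (lam x y : ℝ) : dexpTerm lam x y 0 = 1 := by simp [dexpTerm, dff_zero]

theorem dexpTerm_succ (lam x y : ℝ) (n : ℕ) :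
    dexpTerm lam x y (n + 1) = dexpTerm lam x y n * ((x - n * lam) * y / (n + 1)) := by
  simp only [dexpTerm, dff_succ, factorial_succ, pow_succ]
  push_cast
  field_simp

theorem dexpTerm_succ_eq_add (lam x y : ℝ) (n : ℕ) :
    dexpTerm lam x y (n + 1) =
      dexpTerm lam (x - lam) y (n + 1) + lam * y * dexpTerm lam (x - lam) y n := by
  simp only [dexpTerm, factorial_succ, pow_succ]
  rw [dff_succ', dff_succ lam (x - lam)]
  push_cast
  field_simp
  ring

theorem eventually_abs_dexpTerm_succ_le (lam x y : ℝ) {r : ℝ} (hr : |lam * y| < r) :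
    ∀ᶠ n in atTop, |dexpTerm lam x y (n + 1)| ≤ r * |dexpTerm lam x y n| := by
  have hratio : Tendsto (fun n : ℕ => (x - n * lam) * y / (n + 1)) atTop (𝓝 (-(lam * y))) := by
    have h := ((tendsto_one_div_add_atTop_nhds_zero_nat (𝕜 := ℝ)).const_mul (x * y)).sub
      ((tendsto_natCast_div_add_atTop (1 : ℝ)).const_mul (lam * y))
    rw [mul_zero, mul_one, zero_sub] at h
    refine h.congr fun n => ?_
    field_simp
  have hlt : ∀ᶠ n : ℕ in atTop, |(x - n * lam) * y / (n + 1)| < r :=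
    hratio.abs.eventually (gt_mem_nhds (by rwa [abs_neg]))
  filter_upwards [hlt] with n hn
  rw [dexpTerm_succ, abs_mul, mul_comm r]
  exact mul_le_mul_of_nonneg_left hn.le (abs_nonneg _)

theorem summable_abs_dexpTerm (lam x y : ℝ) (hy : |lam * y| < 1) :
    Summable fun n => |dexpTerm lam x y n| := by
  refine summable_of_ratio_norm_eventually_le (r := (1 + |lam * y|) / 2) (by linarith) ?_
  simpa only [Real.norm_eq_abs, abs_abs] using
    eventually_abs_dexpTerm_succ_le lam x y (r := (1 + |lam * y|) / 2) (by linarith)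

theorem summable_dexpTerm (lam x y : ℝ) (hy : |lam * y| < 1) : Summable (dexpTerm lam x y) :=
  (summable_abs_dexpTerm lam x y hy).of_abs

theorem one_add_mul_tsum_dexpTerm_sub (lam x y : ℝ) (hy : |lam * y| < 1) :
    (1 + lam * y) * ∑' n, dexpTerm lam (x - lam) y n = ∑' n, dexpTerm lam x y n := by
  have hs := summable_dexpTerm lam (x - lam) y hy
  rw [(summable_dexpTerm lam x y hy).tsum_eq_zero_add, hs.tsum_eq_zero_add,
    tsum_congr (dexpTerm_succ_eq_add lam x y),
    ((summable_nat_add_iff 1).2 hs).tsum_add (hs.mul_left _), tsum_mul_left,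
    hs.tsum_eq_zero_add, dexpTerm_zero, dexpTerm_zero]
  ring

theorem one_add_mul_pow_tsum_dexpTerm (lam y : ℝ) (hy : |lam * y| < 1) (k : ℕ) :
    (1 + lam * y) ^ k * ∑' n, dexpTerm lam (1 - k * lam) y n = dexp lam y := by
  induction k with
  | zero => simp [dexp, dexpTerm]
  | succ k ih =>
    have hx : (1 : ℝ) - ((k + 1 : ℕ) : ℝ) * lam = 1 - k * lam - lam := by push_cast; ring
    rw [hx, pow_succ, mul_assoc, one_add_mul_tsum_dexpTerm_sub lam _ y hy, ih]

theorem dexpTerm_add_mul_descFactorial (lam x y : ℝ) (n k : ℕ) :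
    dexpTerm lam x y (n + k) * (n + k).descFactorial k =
      dff lam x k * y ^ k * dexpTerm lam (x - k * lam) y n := by
  have hfac : ((n + k)! : ℝ) = n ! * (n + k).descFactorial k := by
    rw [← factorial_mul_descFactorial (le_add_left k n), Nat.add_sub_cancel]
    push_cast
    ring
  rw [dexpTerm, dexpTerm, add_comm n k, dff_add, pow_add, add_comm k n, hfac]
  have : ((n + k).descFactorial k : ℝ) ≠ 0 := by
    exact_mod_cast (Nat.descFactorial_pos.2 (le_add_left k n)).ne'
  field_simp

theorem summable_abs_dexpTerm_mul_descFactorial (lam x y : ℝ) (hy : |lam * y| < 1) (k : ℕ) :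
    Summable fun n => |dexpTerm lam x y n| * n.descFactorial k := by
  refine (summable_nat_add_iff k).1 ?_
  refine ((summable_abs_dexpTerm lam (x - k * lam) y hy).mul_left |dff lam x k * y ^ k|).congr
    fun n => ?_
  rw [← abs_mul, ← dexpTerm_add_mul_descFactorial, abs_mul, Nat.abs_cast]

theorem hasSum_dexpTerm_mul_descFactorial (lam x y : ℝ) (hy : |lam * y| < 1) (k : ℕ) :
    HasSum (fun n => dexpTerm lam x y n * n.descFactorial k)
      (dff lam x k * y ^ k * ∑' n, dexpTerm lam (x - k * lam) y n) := by
  rw [← hasSum_nat_add_iff' k, sum_eq_zero fun n hn => by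
    rw [Nat.descFactorial_eq_zero_iff_lt.2 (mem_range.1 hn), cast_zero, mul_zero], sub_zero]
  simp_rw [dexpTerm_add_mul_descFactorial]
  exact (summable_dexpTerm lam (x - k * lam) y hy).hasSum.mul_left _

theorem hasSum_mul_sub_sum_range {a t : ℕ → ℝ} {T : ℝ} (ht : HasSum t T)
    (habs : Summable fun m => |t m| * ∑ n ∈ range m, |a n|) :
    HasSum (fun n => a n * (T - ∑ m ∈ range (n + 1), t m))
      (∑' m, t m * ∑ n ∈ range m, a n) := by
  set F : ℕ × ℕ → ℝ := fun q => if q.2 < q.1 then t q.1 * a q.2 else 0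
  have hF_of_le {m n : ℕ} (h : m ≤ n) : F (m, n) = 0 := if_neg (not_lt.2 h)
  have hfiber_fst (m : ℕ) : HasSum (fun n => F (m, n)) (t m * ∑ n ∈ range m, a n) := by
    have h := hasSum_sum_of_ne_finset_zero (L := .unconditional ℕ) (f := fun n => F (m, n))
      (s := range m) fun n hn => hF_of_le (by simpa using hn)
    rwa [mul_sum, ← sum_congr rfl fun n hn => (if_pos (mem_range.1 hn) : F (m, n) = _)]
  have hfiber_snd (n : ℕ) :
      HasSum (fun m => F (m, n)) (a n * (T - ∑ m ∈ range (n + 1), t m)) := by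
    rw [← hasSum_nat_add_iff' (n + 1),
      sum_eq_zero fun m hm => hF_of_le (Nat.lt_succ_iff.1 (mem_range.1 hm)), sub_zero]
    refine (((hasSum_nat_add_iff' (n + 1)).2 ht).mul_left (a n)).congr_fun fun m => ?_
    simp only [F]
    rw [if_pos (by omega), mul_comm]
  have hF : Summable F := by
    refine Summable.of_abs ((summable_prod_of_nonneg fun _ => abs_nonneg _).2
      ⟨fun m => (hfiber_fst m).summable.abs, habs.congr fun m => ?_⟩)
    rw [tsum_eq_sum (s := range m) fun n hn => by rw [hF_of_le (by simpa using hn), abs_zero],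
      mul_sum]
    refine sum_congr rfl fun n hn => ?_
    simp only [F]
    rw [if_pos (mem_range.1 hn), abs_mul]
  rw [(hF.hasSum.prod_fiberwise hfiber_fst).tsum_eq, ← (Equiv.prodComm ℕ ℕ).tsum_eq F]
  exact hF.prod_symm.hasSum.prod_fiberwise hfiber_snd

theorem hasSum_descFactorial_mul_dtail (lam y : ℝ) (hy : |lam * y| < 1) (k : ℕ) :
    HasSum (fun n : ℕ => n.descFactorial k * dtail lam y n)
      (dff lam 1 (k + 1) * y ^ (k + 1) * (∑' n, dexpTerm lam (1 - (k + 1 : ℕ) * lam) y n) /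
        (k + 1)) := by
  have hsum (m : ℕ) :
      ∑ n ∈ range m, (n.descFactorial k : ℝ) = m.descFactorial (k + 1) / (k + 1) := by
    rw [eq_div_iff (by positivity), ← sum_range_descFactorial_mul]
    push_cast
    ring
  have htail := hasSum_mul_sub_sum_range (a := fun n => (n.descFactorial k : ℝ))
    (summable_dexpTerm lam 1 y hy).hasSum ?_
  · simp_rw [hsum, mul_div_assoc'] at htail
    rwa [((hasSum_dexpTerm_mul_descFactorial lam 1 y hy (k + 1)).div_const
      ((k : ℝ) + 1)).tsum_eq] at htail
  · simp_rw [Nat.abs_cast, hsum, mul_div_assoc']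
    exact (summable_abs_dexpTerm_mul_descFactorial lam 1 y hy (k + 1)).div_const _

theorem stmt_8 (p : ℕ) (lam y : ℝ) (hy : |lam * y| < 1) :
    HasSum (fun n : ℕ => dff lam n p * dtail lam y n)
      (∑ k ∈ Finset.range (p + 1), dStirling lam p k * (y ^ (k + 1) / (k + 1)) *
        dff lam 1 (k + 1) * (1 + lam * y) ^ (-(k + 1 : ℤ)) * dexp lam y) := by
  have hy' : 1 + lam * y ≠ 0 := by linarith [neg_abs_le (lam * y)]
  have hterms := hasSum_sum (s := range (p + 1)) fun k _ =>
    (hasSum_descFactorial_mul_dtail lam y hy k).mul_left (dStirling lam p k)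
  have hvalue (k : ℕ) : dStirling lam p k * (y ^ (k + 1) / (k + 1)) * dff lam 1 (k + 1) *
      (1 + lam * y) ^ (-(k + 1 : ℤ)) * dexp lam y = dStirling lam p k *
        (dff lam 1 (k + 1) * y ^ (k + 1) * (∑' n, dexpTerm lam (1 - (k + 1 : ℕ) * lam) y n) /
          (k + 1)) := by
    have hpow : (1 + lam * y) ^ (-(k + 1 : ℤ)) = ((1 + lam * y) ^ (k + 1))⁻¹ := by
      rw [zpow_neg]
      norm_cast
    rw [hpow, ← one_add_mul_pow_tsum_dexpTerm lam y hy (k + 1)]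
    field_simp
  rw [sum_congr rfl fun k _ => hvalue k]
  refine hterms.congr_fun fun n => ?_
  rw [dff_natCast_eq_sum_dStirling_mul_descFactorial, sum_mul]
  exact sum_congr rfl fun k _ => mul_assoc _ _ _
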